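/- arXiv:2307.11245 — 5 statements merged into one kernel-verified Lean document; each statement's English description precedes it below -/
import Mathlib

section
/- The sequence of functions g_n(z,λ) := 2^{-n} log⁺|f_λⁿ(z)| converges uniformly on compact subsets of ℂ² to a continuous function G : ℂ² → ℝ. -/
/-- `log⁺ t = log (max t 1)`. -/
noncomputable def logPlus (t : ℝ) : ℝ := Real.log (max t 1)

/-!
With `w = f_λⁿ(z)`, the triangle inequality gives
`|log⁺ |w² + λ| - 2 log⁺ |w|| ≤ log 2 + log⁺ |λ|`, hence
`|g_{n+1} - g_n| ≤ 2^{-(n+1)} (log 2 + log⁺ |λ|)`. So `(g_n)` is uniformly Cauchy wherever `|λ|`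
is bounded, and its limit, being a locally uniform limit of continuous functions, is continuous.
-/

open Filter Real Topology

theorem logPlus_eq_posLog {t : ℝ} (ht : 0 ≤ t) : logPlus t = log⁺ t := by
  rw [posLog_eq_log_max_one ht, logPlus, max_comm]

theorem abs_posLog_norm_sq_add_sub_le {𝕜 : Type*} [NormedDivisionRing 𝕜] (w c : 𝕜) :
    |log⁺ ‖w ^ 2 + c‖ - 2 * log⁺ ‖w‖| ≤ log 2 + log⁺ ‖c‖ := by
  have hsq : log⁺ ‖w ^ 2‖ = 2 * log⁺ ‖w‖ := by rw [norm_pow, posLog_pow, Nat.cast_ofNat]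
  have hupper := posLog_norm_add_le (w ^ 2) c
  have hlower := posLog_norm_add_le (w ^ 2 + c) (-c)
  rw [add_neg_cancel_right, norm_neg] at hlower
  rw [abs_le]
  constructor <;> linarith

theorem Continuous.iterate_of_param {X Y : Type*} [TopologicalSpace X] [TopologicalSpace Y]
    {f : X → Y → Y} (hf : Continuous fun p : Y × X => f p.2 p.1) (n : ℕ) :
    Continuous fun p : Y × X => (f p.2)^[n] p.1 := by
  induction n with
  | zero => exact continuous_fst
  | succ n ih =>
    simp_rw [Function.iterate_succ_apply']
    exact hf.comp (ih.prodMk continuous_snd)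

theorem tendstoUniformlyOn_limUnder_of_dist_le_geometric_two {α β : Type*} [PseudoMetricSpace β]
    [CompleteSpace β] [Nonempty β] {f : ℕ → α → β} {C : α → ℝ}
    (hf : ∀ n x, dist (f n x) (f (n + 1) x) ≤ C x / 2 / 2 ^ n) {s : Set α} {B : ℝ}
    (hB : ∀ x ∈ s, C x ≤ B) :
    TendstoUniformlyOn f (fun x => limUnder atTop (f · x)) atTop s := by
  have hlim x : Tendsto (f · x) atTop (𝓝 (limUnder atTop (f · x))) :=
    (cauchySeq_of_le_geometric_two (hf · x)).tendsto_limUnder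
  have hB0 : Tendsto (fun n : ℕ => B / 2 ^ n) atTop (𝓝 0) :=
    tendsto_const_nhds.div_atTop (tendsto_pow_atTop_atTop_of_one_lt one_lt_two)
  rw [Metric.tendstoUniformlyOn_iff]
  intro ε hε
  filter_upwards [hB0.eventually (gt_mem_nhds hε)] with n hn x hx
  rw [dist_comm]
  calc dist (f n x) (limUnder atTop (f · x)) ≤ C x / 2 ^ n :=
        dist_le_of_le_geometric_two_of_tendsto (hf · x) (hlim x) n
    _ ≤ B / 2 ^ n := by gcongr; exact hB x hx
    _ < ε := hn

noncomputable def greenApprox (n : ℕ) (p : ℂ × ℂ) : ℝ :=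
  2⁻¹ ^ n * log⁺ ‖(fun z => z ^ 2 + p.2)^[n] p.1‖

noncomputable def green (p : ℂ × ℂ) : ℝ := limUnder atTop (greenApprox · p)

theorem dist_greenApprox_succ_le (n : ℕ) (p : ℂ × ℂ) :
    dist (greenApprox n p) (greenApprox (n + 1) p) ≤ (log 2 + log⁺ ‖p.2‖) / 2 / 2 ^ n := by
  set w := (fun z => z ^ 2 + p.2)^[n] p.1
  have hsucc : greenApprox (n + 1) p - greenApprox n p =
      2⁻¹ ^ (n + 1) * (log⁺ ‖w ^ 2 + p.2‖ - 2 * log⁺ ‖w‖) := by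
    rw [greenApprox, greenApprox, Function.iterate_succ_apply', pow_succ]
    ring
  rw [dist_comm, Real.dist_eq, hsucc, abs_mul, abs_of_pos (by positivity)]
  calc 2⁻¹ ^ (n + 1) * |log⁺ ‖w ^ 2 + p.2‖ - 2 * log⁺ ‖w‖|
      ≤ 2⁻¹ ^ (n + 1) * (log 2 + log⁺ ‖p.2‖) := by
        gcongr; exact abs_posLog_norm_sq_add_sub_le w p.2
    _ = (log 2 + log⁺ ‖p.2‖) / 2 / 2 ^ n := by
        rw [pow_succ, inv_pow]; ring

theorem continuous_greenApprox (n : ℕ) : Continuous (greenApprox n) :=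
  continuous_const.mul <| continuous_posLog.comp <| continuous_norm.comp <|
    Continuous.iterate_of_param (f := fun c z => z ^ 2 + c) (by fun_prop) n

theorem tendstoUniformlyOn_greenApprox (R : ℝ) :
    TendstoUniformlyOn greenApprox green atTop {p | ‖p.2‖ ≤ R} :=
  tendstoUniformlyOn_limUnder_of_dist_le_geometric_two dist_greenApprox_succ_le
    (B := log 2 + log⁺ R) fun p hp => by grw [posLog_le_posLog (norm_nonneg _) hp]

theorem continuous_green : Continuous green :=
  (tendstoLocallyUniformly_of_forall_exists_nhds fun p =>
    ⟨_, (continuous_snd.norm.tendsto p).eventually (eventually_le_nhds (lt_add_one _)),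
      tendstoUniformlyOn_greenApprox _⟩).continuous
    (Frequently.of_forall continuous_greenApprox)

theorem stmt1 :
    ∃ G : ℂ × ℂ → ℝ, Continuous G ∧
      ∀ K : Set (ℂ × ℂ), IsCompact K →
        TendstoUniformlyOn
          (fun (n : ℕ) (p : ℂ × ℂ) =>
            (2 : ℝ)⁻¹ ^ n * logPlus ‖(fun z => z ^ 2 + p.2)^[n] p.1‖)
          G Filter.atTop K := by
  refine ⟨green, continuous_green, fun K hK => ?_⟩
  obtain ⟨R, hR⟩ := (hK.image continuous_snd).isBounded.exists_norm_le
  simp_rw [logPlus_eq_posLog (norm_nonneg _)]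
  exact (tendstoUniformlyOn_greenApprox R).mono fun p hp => hR _ (Set.mem_image_of_mem _ hp)
end

section
/- There is a constant C > 0 with the following property: for every polynomial z ∈ ℂ[λ], writing z_n ∈ ℂ[λ] for the polynomial z_n(λ) := f_λⁿ(z(λ)), the limit ĥ := lim_{n→∞} 2^{-n} deg(z_n) exists in ℝ, and |deg(z_n) − 2ⁿ·ĥ| ≤ C·(deg(z) + 1) for all n ≥ 0. -/
/-!
Since `z₁ = z² + λ` has degree `d := max (2 deg z) 1 ≥ 1`, the leading term of `zₙ²` is never
cancelled by `λ` from then on, so `deg zₙ₊₁ = 2ⁿ d` exactly. Hence `2⁻ⁿ deg zₙ` is eventually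
constant with value `ĥ = d / 2`, and only `n = 0` contributes an error, of size at most `1 / 2`.
-/

/-- `z_n ∈ ℂ[λ]` with `z_n(λ) = f_λⁿ(z(λ))`, i.e. `z_0 = z` and `z_{n+1} = z_n² + λ`. -/
noncomputable def iterPoly (z : Polynomial ℂ) : ℕ → Polynomial ℂ
  | 0 => z
  | n + 1 => iterPoly z n ^ 2 + Polynomial.X

open Polynomial Filter

lemma Polynomial.natDegree_sq_add_X {R : Type*} [Semiring R] [NoZeroDivisors R] [Nontrivial R]
    (p : R[X]) : (p ^ 2 + X).natDegree = max (2 * p.natDegree) 1 := by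
  rcases Nat.eq_zero_or_pos p.natDegree with hp | hp
  · rw [natDegree_add_eq_right_of_natDegree_lt] <;> simp [natDegree_pow, hp]
  · rw [natDegree_add_eq_left_of_natDegree_lt] <;> simp [natDegree_pow] <;> omega

lemma natDegree_iterPoly_succ (z : ℂ[X]) (n : ℕ) :
    (iterPoly z (n + 1)).natDegree = 2 ^ n * max (2 * z.natDegree) 1 := by
  induction n with
  | zero => simp [iterPoly, natDegree_sq_add_X]
  | succ n ih =>
    rw [iterPoly, natDegree_sq_add_X, ih, pow_succ, mul_comm (2 ^ n) 2, mul_assoc]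
    exact max_eq_left (Nat.one_le_iff_ne_zero.2 (by positivity))

theorem stmt5 :
    ∃ C : ℝ, 0 < C ∧ ∀ z : Polynomial ℂ, ∃ h : ℝ,
      Filter.Tendsto (fun n : ℕ => ((iterPoly z n).natDegree : ℝ) / 2 ^ n)
        Filter.atTop (nhds h) ∧
      ∀ n : ℕ, |((iterPoly z n).natDegree : ℝ) - 2 ^ n * h| ≤ C * ((z.natDegree : ℝ) + 1) := by
  refine ⟨1, one_pos, fun z => ?_⟩
  set h : ℝ := (max (2 * z.natDegree) 1 : ℕ) / 2
  have natDegree_succ (m : ℕ) : ((iterPoly z (m + 1)).natDegree : ℝ) = 2 ^ (m + 1) * h := by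
    rw [natDegree_iterPoly_succ, pow_succ, mul_assoc, mul_div_cancel₀ _ two_ne_zero]
    push_cast
    rfl
  refine ⟨h, tendsto_const_nhds.congr' ((eventually_ge_atTop 1).mono fun n hn => ?_), ?_⟩
  · obtain ⟨m, rfl⟩ := Nat.exists_eq_add_of_le' hn
    dsimp only
    rw [natDegree_succ, mul_div_cancel_left₀ _ (by positivity)]
  · rintro (_ | m)
    · rcases Nat.eq_zero_or_pos z.natDegree with hz | hz
      · norm_num [h, iterPoly, hz, abs_le]
      · norm_num [h, iterPoly, max_eq_left (show 1 ≤ 2 * z.natDegree by omega)]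
        positivity
    · rw [natDegree_succ, sub_self, abs_zero]
      positivity
end

section
/- Let P ∈ ℂ[λ,w] and let Q, R ∈ ℂ[λ,x] satisfy P(λ,w) = Q(λ, w² + λ) + w·R(λ, w² + λ) identically. Let Z = {(w,λ) ∈ ℂ² : P(λ,w) = 0}. Then the image f(Z) under f(w,λ) = (w² + λ, λ) equals {(z,λ) ∈ ℂ² : Q(λ,z)² = (z − λ)·R(λ,z)²}. -/
/-! The fibre of `f` over `(z, λ)` is `{(w, λ), (-w, λ)}` with `w² = z - λ`, and by the
decomposition of `P` it meets `Z` exactly when `Q + wR` or `Q - wR` vanishes at `(λ, z)`;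
the product of these two values is `Q² - (z - λ) R²`. -/

open MvPolynomial

/-- The map `f : ℂ² → ℂ²`, `(w, λ) ↦ (w² + λ, λ)`. -/
noncomputable def F (p : ℂ × ℂ) : ℂ × ℂ := (p.1 ^ 2 + p.2, p.2)

theorem sq_eq_sq_mul_sq_iff {A : Type*} [CommRing A] [NoZeroDivisors A] (q r w : A) :
    q ^ 2 = w ^ 2 * r ^ 2 ↔ q + w * r = 0 ∨ q + -w * r = 0 := by
  rw [← sub_eq_zero, ← mul_eq_zero]
  constructor <;> intro h <;> linear_combination h

theorem F_eq_iff {w z lam : ℂ} (hw : w ^ 2 = z - lam) (p : ℂ × ℂ) :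
    F p = (z, lam) ↔ p = (w, lam) ∨ p = (-w, lam) := by
  obtain ⟨a, l⟩ := p
  simp only [F, Prod.mk.injEq]
  constructor
  · rintro ⟨ha, rfl⟩
    have hsq : a ^ 2 = w ^ 2 := by linear_combination ha - hw
    rcases sq_eq_sq_iff_eq_or_eq_neg.1 hsq with rfl | rfl <;> simp
  · rintro (⟨rfl, rfl⟩ | ⟨rfl, rfl⟩) <;> exact ⟨by linear_combination hw, rfl⟩

/- Variables of `P, Q, R` are ordered as (λ, w) resp. (λ, x): index 0 is λ.
Points of ℂ² are `(w, λ)` (resp. `(z, λ)`), so the first coordinate is the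
dynamical variable and the second the parameter. -/
theorem stmt9 (P Q R : MvPolynomial (Fin 2) ℂ)
    (hPQR : ∀ lam w : ℂ,
      eval ![lam, w] P = eval ![lam, w ^ 2 + lam] Q + w * eval ![lam, w ^ 2 + lam] R)
    (Z : Set (ℂ × ℂ)) (hZ : Z = {p | eval ![p.2, p.1] P = 0}) :
    F '' Z = {p : ℂ × ℂ |
      (eval ![p.2, p.1] Q) ^ 2 = (p.1 - p.2) * (eval ![p.2, p.1] R) ^ 2} := by
  subst hZ
  ext ⟨z, lam⟩
  obtain ⟨w, hw⟩ := IsAlgClosed.exists_pow_nat_eq (z - lam) two_pos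
  have hz : w ^ 2 + lam = z := by linear_combination hw
  simp only [Set.mem_image, F_eq_iff hw, and_or_left, exists_or, exists_eq_right,
    Set.mem_ofPred_eq, hPQR, neg_sq, hz, ← hw]
  exact (sq_eq_sq_mul_sq_iff _ _ _).symm
end

section
/- Let λ₀ ∈ ℂ, k ≥ 1, and let y and z be holomorphic functions on an open neighborhood U of λ₀ such that: f_λ^k(y(λ)) = y(λ) for all λ ∈ U; |(f_{λ₀}^k)'(y(λ₀))| > 1; z(λ₀) = y(λ₀); and for every λ ∈ U the orbit of z(λ) under f_λ is bounded, i.e. sup_n |f_λⁿ(z(λ))| < ∞. Then z(λ) = y(λ) for all λ in some neighborhood of λ₀. -/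
/-!
Write `z - y = (λ - λ₀)^m g` with `g λ₀ ≠ 0`. The divided difference
`iterSlope λ k a b = ∏_{j<k} (f_λ^j a + f_λ^j b)` of `f_λ^k` satisfies
`f_λ^k a - f_λ^k b = (a - b) iterSlope λ k a b`, and it equals `(f_λ^k)'(a)` when `a = b`.
Since `y λ` is `k`-periodic, `f_λ^{nk}(z λ) - y λ = (λ - λ₀)^m P_n(λ)` with `P_n` holomorphic
and `P_n(λ₀) = g(λ₀) μ^n`, where `μ = (f_{λ₀}^k)'(y λ₀)`. Bounded orbits stay in the disc of
radius `|λ| + 2`, so the left side is bounded uniformly in `n` on a small circle around `λ₀`,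
and the maximum principle bounds `|P_n(λ₀)|` uniformly in `n`, contradicting `|μ| > 1`.
-/

open Metric Finset Function Filter Topology

abbrev quad (c : ℂ) : ℂ → ℂ := fun w => w ^ 2 + c

section Dynamics

variable (c : ℂ)

lemma norm_add_one_le_norm_quad {w : ℂ} (h : ‖c‖ + 2 ≤ ‖w‖) : ‖w‖ + 1 ≤ ‖quad c w‖ := by
  have hc : ‖w‖ ^ 2 ≤ ‖w ^ 2 + c‖ + ‖c‖ :=
    calc ‖w‖ ^ 2 = ‖w ^ 2 + c - c‖ := by rw [add_sub_cancel_right, norm_pow]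
      _ ≤ ‖w ^ 2 + c‖ + ‖c‖ := norm_sub_le _ _
  nlinarith [norm_nonneg c]

variable {c}

lemma norm_le_of_norm_iterate_le {w : ℂ} {M : ℝ} (hM : ∀ n, ‖(quad c)^[n] w‖ ≤ M) :
    ‖w‖ ≤ ‖c‖ + 2 := by
  by_contra! h
  have escape : ∀ n : ℕ, ‖w‖ + n ≤ ‖(quad c)^[n] w‖ := by
    intro n
    induction n with
    | zero => simp
    | succ n ih =>
      have hn : ‖c‖ + 2 ≤ ‖(quad c)^[n] w‖ := by linarith [n.cast_nonneg (α := ℝ)]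
      rw [iterate_succ_apply', Nat.cast_succ]
      linarith [norm_add_one_le_norm_quad c hn]
  obtain ⟨n, hn⟩ := exists_nat_gt (M - ‖w‖)
  linarith [escape n, hM n]

lemma norm_iterate_le_of_norm_iterate_le {w : ℂ} {M : ℝ} (hM : ∀ n, ‖(quad c)^[n] w‖ ≤ M)
    (n : ℕ) : ‖(quad c)^[n] w‖ ≤ ‖c‖ + 2 :=
  norm_le_of_norm_iterate_le fun j => by rw [← iterate_add_apply]; exact hM (j + n)

variable (c) in
def iterSlope (k : ℕ) (a b : ℂ) : ℂ := ∏ j ∈ range k, ((quad c)^[j] a + (quad c)^[j] b)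

lemma iterate_sub_iterate (k : ℕ) (a b : ℂ) :
    (quad c)^[k] a - (quad c)^[k] b = (a - b) * iterSlope c k a b := by
  induction k with
  | zero => simp [iterSlope]
  | succ k ih =>
    rw [iterSlope, prod_range_succ, iterate_succ_apply', iterate_succ_apply', ← iterSlope]
    linear_combination ((quad c)^[k] a + (quad c)^[k] b) * ih

lemma hasDerivAt_iterate_quad (k : ℕ) (a : ℂ) :
    HasDerivAt (quad c)^[k] (iterSlope c k a a) a := by
  induction k with
  | zero => simpa [iterSlope] using hasDerivAt_id a
  | succ k ih =>
    rw [iterSlope, prod_range_succ, iterate_succ', ← iterSlope]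
    exact (((hasDerivAt_pow 2 _).add_const c).comp a ih).congr_deriv (by push_cast; ring)

lemma iterate_mul_sub_eq_mul_prod {k : ℕ} {y : ℂ} (hy : IsPeriodicPt (quad c) k y) (a : ℂ) (n : ℕ) :
    (quad c)^[n * k] a - y = (a - y) * ∏ i ∈ range n, iterSlope c k ((quad c)^[i * k] a) y := by
  induction n with
  | zero => simp
  | succ n ih =>
    rw [prod_range_succ, ← mul_assoc, ← ih, add_mul, one_mul, add_comm, iterate_add_apply]
    conv_lhs => rw [← hy.eq]
    exact iterate_sub_iterate k _ y

lemma prod_iterSlope_iterate_of_isPeriodicPt {k : ℕ} {y : ℂ} (hy : IsPeriodicPt (quad c) k y)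
    (n : ℕ) :
    ∏ i ∈ range n, iterSlope c k ((quad c)^[i * k] y) y = deriv (quad c)^[k] y ^ n := by
  rw [(hasDerivAt_iterate_quad k y).deriv, ← card_range n, ← prod_const, card_range]
  exact prod_congr rfl fun i _ => by rw [(hy.const_mul i).eq]

end Dynamics

section Parameter

variable {s : Set ℂ} {a b : ℂ → ℂ}

lemma DifferentiableOn.iterate_quad (ha : DifferentiableOn ℂ a s) (n : ℕ) :
    DifferentiableOn ℂ (fun c => (quad c)^[n] (a c)) s := by
  induction n with
  | zero => exact ha
  | succ n ih =>
    simp only [iterate_succ_apply']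
    exact (ih.pow 2).add differentiableOn_id

lemma DifferentiableOn.iterSlope (ha : DifferentiableOn ℂ a s) (hb : DifferentiableOn ℂ b s)
    (k : ℕ) : DifferentiableOn ℂ (fun c => iterSlope c k (a c) (b c)) s :=
  DifferentiableOn.fun_finsetProd fun j _ => (ha.iterate_quad j).add (hb.iterate_quad j)

end Parameter

section CauchyEstimate

variable {F : Type*} [NormedAddCommGroup F] [NormedSpace ℂ F] {c : ℂ} {m : ℕ}

lemma norm_le_div_pow_of_forall_mem_sphere {f : ℂ → F} {r B : ℝ} (hr : 0 < r)
    (hf : DiffContOnCl ℂ f (ball c r)) (hB : ∀ x ∈ sphere c r, ‖(x - c) ^ m • f x‖ ≤ B) :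
    ‖f c‖ ≤ B / r ^ m := by
  refine Complex.norm_le_of_forall_mem_frontier_norm_le isBounded_ball hf (fun x hx => ?_)
    (subset_closure (mem_ball_self hr))
  rw [frontier_ball c hr.ne'] at hx
  rw [le_div_iff₀ (pow_pos hr m), mul_comm]
  simpa [norm_smul, ← dist_eq_norm, mem_sphere.mp hx] using hB x hx

lemma exists_bound_of_norm_pow_smul_le {ι : Type*} {P : ι → ℂ → F} {b : ℂ → ℝ} {R : ℝ}
    (hR : 0 < R) (hP : ∀ i, DifferentiableOn ℂ (P i) (ball c R)) (hb : ContinuousOn b (ball c R))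
    (hPb : ∀ i, ∀ x ∈ ball c R, ‖(x - c) ^ m • P i x‖ ≤ b x) : ∃ C, ∀ i, ‖P i c‖ ≤ C := by
  have hr : 0 < R / 2 := half_pos hR
  have hsub : closedBall c (R / 2) ⊆ ball c R := closedBall_subset_ball (half_lt_self hR)
  obtain ⟨B, hB⟩ := (isCompact_sphere c (R / 2)).exists_bound_of_continuousOn
    (hb.mono (sphere_subset_closedBall.trans hsub))
  refine ⟨B / (R / 2) ^ m, fun i => norm_le_div_pow_of_forall_mem_sphere hr
    ((hP i).mono (closure_ball_subset_closedBall.trans hsub)).diffContOnCl fun x hx => ?_⟩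
  exact (hPb i x (hsub (sphere_subset_closedBall hx))).trans ((le_abs_self _).trans (hB x hx))

end CauchyEstimate

lemma eq_zero_of_forall_norm_mul_pow_le {𝕜 : Type*} [NormedDivisionRing 𝕜] {a μ : 𝕜} {C : ℝ}
    (hμ : 1 < ‖μ‖) (h : ∀ n : ℕ, ‖a * μ ^ n‖ ≤ C) : a = 0 := by
  by_contra ha
  obtain ⟨n, hn⟩ := pow_unbounded_of_one_lt (C / ‖a‖) hμ
  have hn' := h n
  rw [div_lt_iff₀ (norm_pos_iff.mpr ha)] at hn
  rw [norm_mul, norm_pow, mul_comm] at hn'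
  linarith

theorem stmt13_general (lam₀ : ℂ) (k : ℕ) (U : Set ℂ) (hU : IsOpen U) (hmem₀ : lam₀ ∈ U)
    (y z : ℂ → ℂ) (hy : DifferentiableOn ℂ y U) (hz : DifferentiableOn ℂ z U)
    (hper : ∀ lam ∈ U, (fun w => w ^ 2 + lam)^[k] (y lam) = y lam)
    (hrep : 1 < ‖deriv ((fun w => w ^ 2 + lam₀)^[k]) (y lam₀)‖)
    (heq : z lam₀ = y lam₀)
    (hb : ∀ lam ∈ U, ∃ M : ℝ, ∀ n : ℕ,
      ‖(fun w => w ^ 2 + lam)^[n] (z lam)‖ ≤ M) :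
    ∀ᶠ lam in nhds lam₀, z lam = y lam := by
  have hUn : U ∈ 𝓝 lam₀ := hU.mem_nhds hmem₀
  by_contra hne
  obtain ⟨m, g, hg, hg0, hfac⟩ := ((hz.analyticAt hUn).sub (hy.analyticAt hUn)
    ).exists_eventuallyEq_pow_smul_nonzero_iff.mpr fun h => hne (h.mono fun _ => sub_eq_zero.mp)
  obtain ⟨R, hR, hball⟩ := eventually_nhds_iff_ball.mp
    ((hg.eventually_analyticAt.and hfac).and (hU.eventually_mem hmem₀))
  have hRU : ball lam₀ R ⊆ U := fun x hx => (hball x hx).2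
  have hgR : DifferentiableOn ℂ g (ball lam₀ R) := fun x hx =>
    (hball x hx).1.1.differentiableAt.differentiableWithinAt
  set Q : ℕ → ℂ → ℂ := fun n lam =>
    ∏ i ∈ range n, iterSlope lam k ((quad lam)^[i * k] (z lam)) (y lam)
  have hQ₀ (n : ℕ) : Q n lam₀ = deriv (quad lam₀)^[k] (y lam₀) ^ n := by
    simp only [Q, heq, prod_iterSlope_iterate_of_isPeriodicPt (hper lam₀ hmem₀)]
  obtain ⟨C, hC⟩ := exists_bound_of_norm_pow_smul_le (m := m) (P := fun n lam => g lam * Q n lam)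
    (b := fun lam => ‖lam‖ + 2 + ‖y lam‖) hR
    (fun n => hgR.mul (DifferentiableOn.fun_finsetProd fun i _ =>
      ((hz.mono hRU).iterate_quad (i * k)).iterSlope (hy.mono hRU) k))
    ((continuous_norm.continuousOn.add continuousOn_const).add (hy.continuousOn.norm.mono hRU))
    (fun n lam hlam => by
      obtain ⟨M, hM⟩ := hb lam (hRU hlam)
      rw [smul_eq_mul, ← mul_assoc, ← smul_eq_mul ((lam - lam₀) ^ m), ← (hball lam hlam).1.2,
        Pi.sub_apply, ← iterate_mul_sub_eq_mul_prod (hper lam (hRU hlam))]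
      exact (norm_sub_le _ _).trans (by gcongr; exact norm_iterate_le_of_norm_iterate_le hM _))
  exact hg0 (eq_zero_of_forall_norm_mul_pow_le hrep fun n => hQ₀ n ▸ hC n)

theorem stmt13 (lam₀ : ℂ) (k : ℕ) (hk : 1 ≤ k) (U : Set ℂ) (hU : IsOpen U) (hmem₀ : lam₀ ∈ U)
    (y z : ℂ → ℂ) (hy : DifferentiableOn ℂ y U) (hz : DifferentiableOn ℂ z U)
    (hper : ∀ lam ∈ U, (fun w => w ^ 2 + lam)^[k] (y lam) = y lam)
    (hrep : 1 < ‖deriv ((fun w => w ^ 2 + lam₀)^[k]) (y lam₀)‖)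
    (heq : z lam₀ = y lam₀)
    (hb : ∀ lam ∈ U, ∃ M : ℝ, ∀ n : ℕ,
      ‖(fun w => w ^ 2 + lam)^[n] (z lam)‖ ≤ M) :
    ∀ᶠ lam in nhds lam₀, z lam = y lam :=
  stmt13_general lam₀ k U hU hmem₀ y z hy hz hper hrep heq hb
end

section
/- Let U ⊆ ℂ be open and let z : U → ℂ be holomorphic such that for every λ ∈ U the orbit of z(λ) under f_λ is bounded, i.e. sup_n |f_λⁿ(z(λ))| < ∞. Then for every compact set K ⊆ U one has sup_{n ∈ ℕ} sup_{λ ∈ K} |f_λⁿ(z(λ))| < ∞. -/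
/-!
Escape radius argument: if `‖w‖ > max 2 ‖c‖` then `‖w ^ 2 + c‖ ≥ ‖w‖ (‖w‖ - 1)`, so the orbit
of `w` under `w ↦ w ^ 2 + c` grows geometrically with ratio `‖w‖ - 1 > 1`. Hence every bounded
orbit stays in the closed ball of radius `max 2 ‖c‖`, and this radius is uniformly bounded for
`c` in a compact set.
-/

lemma mul_sub_one_le_norm_sq_add {c w : ℂ} (hc : ‖c‖ ≤ ‖w‖) :
    ‖w‖ * (‖w‖ - 1) ≤ ‖w ^ 2 + c‖ :=
  calc ‖w‖ * (‖w‖ - 1) ≤ ‖w ^ 2‖ - ‖c‖ := by rw [norm_pow]; linarith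
    _ ≤ ‖w ^ 2 + c‖ := by
      simpa only [norm_neg, sub_neg_eq_add] using norm_sub_norm_le (w ^ 2) (-c)

lemma pow_mul_norm_le_norm_iterate {c w : ℂ} (h2 : 2 ≤ ‖w‖) (hc : ‖c‖ ≤ ‖w‖) (k : ℕ) :
    (‖w‖ - 1) ^ k * ‖w‖ ≤ ‖(fun x => x ^ 2 + c)^[k] w‖ := by
  induction k with
  | zero => simp
  | succ k ih =>
    set u := (fun x => x ^ 2 + c)^[k] w
    have hwu : ‖w‖ ≤ ‖u‖ :=
      (le_mul_of_one_le_left (norm_nonneg w) (one_le_pow₀ (by linarith))).trans ih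
    rw [Function.iterate_succ_apply']
    calc (‖w‖ - 1) ^ (k + 1) * ‖w‖ = (‖w‖ - 1) ^ k * ‖w‖ * (‖w‖ - 1) := by ring
      _ ≤ ‖u‖ * (‖u‖ - 1) := by gcongr; linarith
      _ ≤ ‖u ^ 2 + c‖ := mul_sub_one_le_norm_sq_add (hc.trans hwu)

lemma norm_iterate_le_of_bounded_orbit {c w : ℂ} {M : ℝ}
    (hM : ∀ n : ℕ, ‖(fun x => x ^ 2 + c)^[n] w‖ ≤ M) (n : ℕ) :
    ‖(fun x => x ^ 2 + c)^[n] w‖ ≤ max 2 ‖c‖ := by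
  set v := (fun x => x ^ 2 + c)^[n] w
  by_contra! hv
  have hv2 : 2 < ‖v‖ := (le_max_left _ _).trans_lt hv
  obtain ⟨k, hk⟩ :=
    pow_unbounded_of_one_lt (M / ‖v‖) (by linarith : (1 : ℝ) < ‖v‖ - 1)
  have hgrowth := pow_mul_norm_le_norm_iterate hv2.le ((le_max_right _ _).trans hv.le) k
  rw [← Function.iterate_add_apply] at hgrowth
  have := hM (k + n)
  rw [div_lt_iff₀ (by linarith)] at hk
  linarith

theorem stmt14_general (U : Set ℂ) (z : ℂ → ℂ)
    (hb : ∀ lam ∈ U, ∃ M : ℝ, ∀ n : ℕ,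
      ‖(fun w => w ^ 2 + lam)^[n] (z lam)‖ ≤ M) :
    ∀ K : Set ℂ, K ⊆ U → IsCompact K →
      ∃ M : ℝ, ∀ n : ℕ, ∀ lam ∈ K,
        ‖(fun w => w ^ 2 + lam)^[n] (z lam)‖ ≤ M := by
  intro K hKU hK
  obtain ⟨C, hC⟩ := hK.isBounded.subset_closedBall 0
  refine ⟨max 2 C, fun n lam hlam => ?_⟩
  obtain ⟨M, hM⟩ := hb lam (hKU hlam)
  have hlamC : ‖lam‖ ≤ C := by simpa using hC hlam
  exact (norm_iterate_le_of_bounded_orbit hM n).trans (max_le_max le_rfl hlamC)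

theorem stmt14 (U : Set ℂ) (hU : IsOpen U) (z : ℂ → ℂ) (hz : DifferentiableOn ℂ z U)
    (hb : ∀ lam ∈ U, ∃ M : ℝ, ∀ n : ℕ,
      ‖(fun w => w ^ 2 + lam)^[n] (z lam)‖ ≤ M) :
    ∀ K : Set ℂ, K ⊆ U → IsCompact K →
      ∃ M : ℝ, ∀ n : ℕ, ∀ lam ∈ K,
        ‖(fun w => w ^ 2 + lam)^[n] (z lam)‖ ≤ M :=
  stmt14_general U z hb
end
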